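/- Let S be a connected colorful graph, let e* ∈ E(S), and let H be a colored graph on color set V(S) that is not surjectively S-colored. Then the number of color-preserving homomorphisms from H to the CFI graph Γ(S, χ_∅) equals the number of color-preserving homomorphisms from H to the CFI graph Γ(S, χ_{e*}), i.e., hom(H, Γ(S, χ_∅)) = hom(H, Γ(S, χ_{e*})). -/

import Mathlib

open SimpleGraph

/-- Color-preserving homomorphism count between colored graphs. -/
noncomputable def cpHomCount {VH VG C : Type} (H : SimpleGraph VH) (cH : VH → C)
    (G : SimpleGraph VG) (cG : VG → C) : ℕ :=
  Nat.card {f : H →g G // ∀ v, cG (f v) = cH v}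

variable {V : Type} [Fintype V] [DecidableEq V]

/-- Vertices of the CFI graph over a colorful graph `S`: pairs of a color `v ∈ V(S)`
and an even assignment on the edges incident to `v` (encoded as a function on all of
`Sym2 V` supported on the incidence set of `v`). -/
def CFIVert (S : SimpleGraph V) : Type :=
  Σ v : V, {a : Sym2 V → ZMod 2 //
    (∀ e, a e ≠ 0 → e ∈ S.incidenceSet v) ∧ ∑ e : Sym2 V, a e = 0}

/-- The CFI graph of a colorful graph `S` with charge function `c`: vertices
`(u, a_u)` and `(v, a_v)` are adjacent iff `uv ∈ E(S)` and
`a_u(uv) + a_v(uv) = c(uv)`.  Its coloring is `Sigma.fst : CFIVert S → V`. -/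
def CFI (S : SimpleGraph V) (c : Sym2 V → ZMod 2) : SimpleGraph (CFIVert S) where
  Adj x y := S.Adj x.1 y.1 ∧ x.2.1 s(x.1, y.1) + y.2.1 s(x.1, y.1) = c s(x.1, y.1)
  symm := by
    constructor
    rintro ⟨u, a⟩ ⟨v, b⟩ ⟨hadj, hsum⟩
    refine ⟨hadj.symm, ?_⟩
    simp only [Sym2.eq_swap (a := v) (b := u)]
    rw [add_comm]; exact hsum
  loopless := ⟨fun x h => S.loopless.irrefl _ h.1⟩

/-!
If `H` is not `S`-coloured, no homomorphism exists at all. Otherwise some edge `ij` of `S` is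
not the colour pair of an edge of `H`; homomorphisms from `H` never look at the charge on `ij`, so
`Γ(S, χ_∅)` may be replaced by `Γ(S, χ_{ij})`. Adding an even assignment `t w` to every vertex of
colour `w` is a colour-preserving isomorphism `Γ(S, c) ≅ Γ(S, c')` whenever `c` and `c'` differ
only on edges at `w`, with equal total charge. This moves a single unit of charge from one edge
at `w` to another, hence, `S` being connected, from `ij` to `e*`.
-/

section cpHomCount

variable {VH VG VG' C : Type} {H : SimpleGraph VH} {cH : VH → C} {G : SimpleGraph VG}
  {cG : VG → C}

theorem cpHomCount_eq_zero {u v : VH} (huv : H.Adj u v)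
    (hG : ∀ x y, cG x = cH u → cG y = cH v → ¬ G.Adj x y) : cpHomCount H cH G cG = 0 :=
  have : IsEmpty {f : H →g G // ∀ v, cG (f v) = cH v} :=
    ⟨fun f => hG _ _ (f.2 u) (f.2 v) (f.1.map_rel huv)⟩
  Nat.card_of_isEmpty

theorem cpHomCount_congr_adj {G' : SimpleGraph VG}
    (hG : ∀ u v, H.Adj u v → ∀ x y, cG x = cH u → cG y = cH v → (G.Adj x y ↔ G'.Adj x y)) :
    cpHomCount H cH G cG = cpHomCount H cH G' cG :=
  Nat.card_congr
    { toFun f := ⟨⟨f.1, fun huv => (hG _ _ huv _ _ (f.2 _) (f.2 _)).1 (f.1.map_rel huv)⟩, f.2⟩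
      invFun f := ⟨⟨f.1, fun huv => (hG _ _ huv _ _ (f.2 _) (f.2 _)).2 (f.1.map_rel huv)⟩, f.2⟩
      left_inv := fun _ => rfl
      right_inv := fun _ => rfl }

theorem cpHomCount_congr_iso {G' : SimpleGraph VG'} {cG' : VG' → C} (φ : G ≃g G')
    (hφ : ∀ x, cG' (φ x) = cG x) : cpHomCount H cH G cG = cpHomCount H cH G' cG' :=
  Nat.card_congr <| (Iso.refl.homCongr φ).subtypeEquiv fun f => by simp [hφ]

end cpHomCount

namespace CFI

-- Rebinding `V` drops the ambient `[DecidableEq V]`, needed only for the charges `Pi.single e 1`.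
variable {V : Type} [Fintype V] {S : SimpleGraph V} {VH : Type} {H : SimpleGraph VH} {cH : VH → V}

theorem cpHomCount_eq_zero_of_not_adj {u v : VH} (huv : H.Adj u v) (hS : ¬ S.Adj (cH u) (cH v))
    (c : Sym2 V → ZMod 2) : cpHomCount H cH (CFI S c) Sigma.fst = 0 :=
  cpHomCount_eq_zero huv fun _ _ hx hy hxy => hS (hx ▸ hy ▸ hxy.1)

theorem cpHomCount_congr_charge {c c' : Sym2 V → ZMod 2}
    (hc : ∀ u v, H.Adj u v → c s(cH u, cH v) = c' s(cH u, cH v)) :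
    cpHomCount H cH (CFI S c) Sigma.fst = cpHomCount H cH (CFI S c') Sigma.fst :=
  cpHomCount_congr_adj fun u v huv x y hx hy => by
    have hxy : c s(x.1, y.1) = c' s(x.1, y.1) := by rw [hx, hy]; exact hc u v huv
    exact and_congr_right fun _ => by rw [hxy]

section twist

variable (t : V → Sym2 V → ZMod 2) (ht_supp : ∀ v e, t v e ≠ 0 → e ∈ S.incidenceSet v)
  (ht_sum : ∀ v, ∑ e, t v e = 0)

def twist (x : CFIVert S) : CFIVert S :=
  ⟨x.1, x.2.1 + t x.1, fun e he => by
      by_cases hx : x.2.1 e = 0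
      · exact ht_supp _ _ (by simpa [hx] using he)
      · exact x.2.2.1 e hx,
    by simp [Finset.sum_add_distrib, x.2.2.2, ht_sum]⟩

theorem twist_involutive : Function.Involutive (twist t ht_supp ht_sum) := fun x =>
  Sigma.ext rfl <| heq_of_eq <| Subtype.ext <| by
    funext e
    simp [twist, add_assoc, CharTwo.add_self_eq_zero]

theorem twist_adj_twist_iff {c c' : Sym2 V → ZMod 2}
    (hc : ∀ u v, S.Adj u v → c' s(u, v) = c s(u, v) + t u s(u, v) + t v s(u, v))
    (x y : CFIVert S) :
    (CFI S c').Adj (twist t ht_supp ht_sum x) (twist t ht_supp ht_sum y) ↔ (CFI S c).Adj x y :=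
  and_congr_right fun huv => by
    change x.2.1 s(x.1, y.1) + t x.1 s(x.1, y.1) + (y.2.1 s(x.1, y.1) + t y.1 s(x.1, y.1)) =
      c' s(x.1, y.1) ↔ _
    rw [hc x.1 y.1 huv]
    constructor <;> intro h <;> linear_combination h

end twist

theorem cpHomCount_eq_of_twist (t : V → Sym2 V → ZMod 2)
    (ht_supp : ∀ v e, t v e ≠ 0 → e ∈ S.incidenceSet v) (ht_sum : ∀ v, ∑ e, t v e = 0)
    {c c' : Sym2 V → ZMod 2}
    (hc : ∀ u v, S.Adj u v → c' s(u, v) = c s(u, v) + t u s(u, v) + t v s(u, v)) :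
    cpHomCount H cH (CFI S c) Sigma.fst = cpHomCount H cH (CFI S c') Sigma.fst :=
  cpHomCount_congr_iso
    ⟨(twist_involutive t ht_supp ht_sum).toPerm, twist_adj_twist_iff t ht_supp ht_sum hc _ _⟩
    fun _ => rfl

section

variable [DecidableEq V]

theorem cpHomCount_eq_of_eq_off_incidenceSet (w : V) {c c' : Sym2 V → ZMod 2}
    (hcc : ∀ e, c e ≠ c' e → e ∈ S.incidenceSet w) (hsum : ∑ e, c e = ∑ e, c' e) :
    cpHomCount H cH (CFI S c) Sigma.fst = cpHomCount H cH (CFI S c') Sigma.fst := by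
  refine cpHomCount_eq_of_twist (Pi.single w (c + c')) (fun v e he => ?_) (fun v => ?_)
    fun u v huv => ?_
  · rcases eq_or_ne v w with rfl | hv
    · exact hcc e (CharTwo.add_eq_zero.not.mp (by simpa using he))
    · simp [hv] at he
  · rcases eq_or_ne v w with rfl | hv
    · simp [Finset.sum_add_distrib, hsum, CharTwo.add_self_eq_zero]
    · simp [hv]
  · rcases eq_or_ne u w with rfl | hu
    · simp [huv.ne', ← add_assoc, CharTwo.add_self_eq_zero]
    rcases eq_or_ne v w with rfl | hv
    · simp [hu, ← add_assoc, CharTwo.add_self_eq_zero]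
    have hc : c s(u, v) = c' s(u, v) := by
      by_contra h
      rcases Sym2.mem_iff.mp (hcc _ h).2 with h | h
      exacts [hu h.symm, hv h.symm]
    simp [hu, hv, hc]

theorem cpHomCount_single_eq_of_incident {w : V} {e f : Sym2 V} (he : e ∈ S.incidenceSet w)
    (hf : f ∈ S.incidenceSet w) :
    cpHomCount H cH (CFI S (Pi.single e 1)) Sigma.fst =
      cpHomCount H cH (CFI S (Pi.single f 1)) Sigma.fst := by
  refine cpHomCount_eq_of_eq_off_incidenceSet w (fun g hg => ?_) (by simp)
  rcases eq_or_ne g e with rfl | hge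
  · exact he
  rcases eq_or_ne g f with rfl | hgf
  · exact hf
  simp [hge, hgf] at hg

theorem cpHomCount_single_eq_of_walk {u v : V} (p : S.Walk u v) {e f : Sym2 V}
    (he : e ∈ S.incidenceSet u) (hf : f ∈ S.incidenceSet v) :
    cpHomCount H cH (CFI S (Pi.single e 1)) Sigma.fst =
      cpHomCount H cH (CFI S (Pi.single f 1)) Sigma.fst := by
  induction p generalizing e with
  | nil => exact cpHomCount_single_eq_of_incident he hf
  | cons h _ ih =>
    exact (cpHomCount_single_eq_of_incident he (S.mk'_mem_incidenceSet_left_iff.2 h)).trans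
      (ih (S.mk'_mem_incidenceSet_right_iff.2 h) hf)

theorem cpHomCount_single_eq_of_connected (hS : S.Connected) {e f : Sym2 V}
    (he : e ∈ S.edgeSet) (hf : f ∈ S.edgeSet) :
    cpHomCount H cH (CFI S (Pi.single e 1)) Sigma.fst =
      cpHomCount H cH (CFI S (Pi.single f 1)) Sigma.fst := by
  induction e using Sym2.ind with | _ a b =>
  induction f using Sym2.ind with | _ x y =>
  exact cpHomCount_single_eq_of_walk (hS.preconnected a x).some ⟨he, Sym2.mem_mk_left _ _⟩
    ⟨hf, Sym2.mem_mk_left _ _⟩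

end

end CFI

theorem cpHomCount_CFI_eq_of_not_surjectively_colored_general
    {VH : Type}
    (S : SimpleGraph V) (hconn : S.Connected)
    (estar : Sym2 V) (he : estar ∈ S.edgeSet)
    (H : SimpleGraph VH) (cH : VH → V)
    (hnotsurj : ¬ ((∀ u v, H.Adj u v → S.Adj (cH u) (cH v)) ∧
        (∀ i j, S.Adj i j → ∃ u v, H.Adj u v ∧ cH u = i ∧ cH v = j))) :
    cpHomCount H cH (CFI S (fun _ => 0)) Sigma.fst =
      cpHomCount H cH (CFI S (fun e => if e = estar then 1 else 0)) Sigma.fst := by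
  rcases not_and_or.mp hnotsurj with hcolored | hsurj
  · push Not at hcolored
    obtain ⟨u, v, huv, hS⟩ := hcolored
    rw [CFI.cpHomCount_eq_zero_of_not_adj huv hS, CFI.cpHomCount_eq_zero_of_not_adj huv hS]
  push Not at hsurj
  obtain ⟨i, j, hij, hmiss⟩ := hsurj
  have hcharge (u v : VH) (huv : H.Adj u v) :
      (0 : ZMod 2) = (Pi.single s(i, j) 1 : Sym2 V → ZMod 2) s(cH u, cH v) := by
    have hne : s(cH u, cH v) ≠ s(i, j) := by
      rw [Ne, Sym2.eq_iff]
      rintro (⟨hu, hv⟩ | ⟨hu, hv⟩)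
      exacts [hmiss u v huv hu hv, hmiss v u huv.symm hv hu]
    simp [hne]
  calc cpHomCount H cH (CFI S fun _ => 0) Sigma.fst
      = cpHomCount H cH (CFI S (Pi.single s(i, j) 1)) Sigma.fst :=
        CFI.cpHomCount_congr_charge hcharge
    _ = cpHomCount H cH (CFI S (Pi.single estar 1)) Sigma.fst :=
        CFI.cpHomCount_single_eq_of_connected hconn hij he
    _ = _ := by congr 2; exact funext fun e => Pi.single_apply estar 1 e

/-- If `H` is a colored graph on color set `V(S)` that is *not* surjectively
`S`-colored, then `H` has equally many color-preserving homomorphisms into the two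
CFI graphs `Γ(S, χ_∅)` and `Γ(S, χ_{e*})`, for `S` connected and `e* ∈ E(S)`. -/
theorem cpHomCount_CFI_eq_of_not_surjectively_colored
    {VH : Type} [Fintype VH]
    (S : SimpleGraph V) [DecidableRel S.Adj] (hconn : S.Connected)
    (estar : Sym2 V) (he : estar ∈ S.edgeSet)
    (H : SimpleGraph VH) (cH : VH → V)
    (hnotsurj : ¬ ((∀ u v, H.Adj u v → S.Adj (cH u) (cH v)) ∧
        (∀ i j, S.Adj i j → ∃ u v, H.Adj u v ∧ cH u = i ∧ cH v = j))) :
    cpHomCount H cH (CFI S (fun _ => 0)) Sigma.fst =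
      cpHomCount H cH (CFI S (fun e => if e = estar then 1 else 0)) Sigma.fst :=
  cpHomCount_CFI_eq_of_not_surjectively_colored_general S hconn estar he H cH hnotsurj
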